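/- Suppose a group Γ acts harmonically on a graph G of genus g > 2, and C ≤ Γ is a normal cyclic subgroup of prime order p with p < g. Suppose further that the quotient map G → G/C is horizontally unramified and that g(G/C) ≤ 1. Then |Γ| ≤ 4(g − 1). -/

import Mathlib

/-!
Since `C` acts freely on vertices and on non-vertical edges, counting gives the Riemann–Hurwitz
formula `g - 1 = |E_v| + p (g(G/C) - 1)`, where `E_v` is the set of `C`-vertical edges. With
`0 ≤ g(G/C) ≤ 1` and `p < g` this gives `0 < |E_v| ≤ 2 (g - 1)`.

Normality of `C` makes the `Γ`-orbit of a vertical edge vertical, and harmonicity forces the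
stabilizer of an edge to act faithfully on its two ends: applied to the cyclic group generated by
an automorphism fixing a vertex and an incident edge, harmonicity shows it fixes every edge at that
vertex, hence, by connectedness, the whole graph. Orbit–stabilizer gives `|Γ| ≤ 2 |E_v|`.
-/

open scoped Classical

/-- A finite connected multigraph without loop edges. -/
structure Multigraph where
  V : Type
  E : Type
  [fintypeV : Fintype V]
  [fintypeE : Fintype E]
  ends : E → Sym2 V
  loopless : ∀ e : E, ¬ (ends e).IsDiag
  connected : (SimpleGraph.fromRel fun x y : V => ∃ e : E, ends e = s(x, y)).Connected

attribute [instance] Multigraph.fintypeV Multigraph.fintypeE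

namespace Multigraph

/-- The genus (first Betti number, cyclomatic number) of a multigraph. -/
def genus (G : Multigraph) : ℤ :=
  (Fintype.card G.E : ℤ) - (Fintype.card G.V : ℤ) + 1

/-- A cycle in a multigraph, given as a nonempty set of edges such that every vertex is
incident to either 0 or 2 of its edges. -/
def IsCycleSet (G : Multigraph) (C : Set G.E) : Prop :=
  C.Nonempty ∧ ∀ x : G.V,
    Nat.card {e : G.E // e ∈ C ∧ x ∈ G.ends e} = 0 ∨
    Nat.card {e : G.E // e ∈ C ∧ x ∈ G.ends e} = 2

end Multigraph

/-- A morphism of multigraphs: vertices go to vertices, and each edge goes either to an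
edge joining the images of its endpoints, or to the common image of its endpoints
(in which case the edge is *vertical*). -/
structure Morphism (G G' : Multigraph) where
  vmap : G.V → G'.V
  emap : G.E → G'.E ⊕ G'.V
  compat : ∀ e : G.E,
    (∀ e', emap e = Sum.inl e' → G'.ends e' = (G.ends e).map vmap) ∧
    (∀ v, emap e = Sum.inr v → (G.ends e).map vmap = Sym2.diag v)

namespace Morphism

/-- A morphism is harmonic if for every vertex `x`, the number of edges incident to `x`
mapping to a given edge `e'` incident to `φ(x)` is independent of the choice of `e'`. -/
def Harmonic {G G' : Multigraph} (φ : Morphism G G') : Prop :=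
  ∀ (x : G.V) (e₁ e₂ : G'.E), φ.vmap x ∈ G'.ends e₁ → φ.vmap x ∈ G'.ends e₂ →
    Nat.card {e : G.E // x ∈ G.ends e ∧ φ.emap e = Sum.inl e₁} =
    Nat.card {e : G.E // x ∈ G.ends e ∧ φ.emap e = Sum.inl e₂}

/-- A morphism is nonconstant if its image is not a single vertex. -/
def Nonconstant {G G' : Multigraph} (φ : Morphism G G') : Prop :=
  ∃ x y : G.V, φ.vmap x ≠ φ.vmap y

/-- Composition of morphisms of multigraphs. -/
def comp {G₁ G₂ G₃ : Multigraph} (ψ : Morphism G₂ G₃) (φ : Morphism G₁ G₂) :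
    Morphism G₁ G₃ where
  vmap := ψ.vmap ∘ φ.vmap
  emap e := Sum.elim ψ.emap (fun v => Sum.inr (ψ.vmap v)) (φ.emap e)
  compat e := by
    constructor
    · intro e'' h
      rcases hφ : φ.emap e with e' | v
      · simp only [hφ, Sum.elim_inl] at h
        have h1 := (φ.compat e).1 e' hφ
        have h2 := (ψ.compat e').1 e'' h
        rw [h2, h1, Sym2.map_map]
      · simp only [hφ, Sum.elim_inr] at h
        simp at h
    · intro v h
      rcases hφ : φ.emap e with e' | v₀
      · simp only [hφ, Sum.elim_inl] at h
        have h1 := (φ.compat e).1 e' hφ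
        have h2 := (ψ.compat e').2 v h
        rw [← Sym2.map_map, ← h1]
        exact h2
      · simp only [hφ, Sum.elim_inr, Sum.inr.injEq] at h
        have h1 := (φ.compat e).2 v₀ hφ
        subst h
        rw [← Sym2.map_map, h1]
        rfl
end Morphism

/-- A group of automorphisms of a multigraph `G` (a faithful action of `Γ` on `G` by
automorphisms, i.e. a subgroup of `Aut(G)`). -/
structure GraphAction (Γ : Type) [Group Γ] (G : Multigraph) where
  actV : Γ →* Equiv.Perm G.V
  actE : Γ →* Equiv.Perm G.E
  ends_map : ∀ (γ : Γ) (e : G.E), G.ends (actE γ e) = (G.ends e).map (actV γ)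
  faithful : ∀ γ : Γ, (∀ x : G.V, actV γ x = x) → (∀ e : G.E, actE γ e = e) → γ = 1

namespace GraphAction

variable {Γ : Type} [Group Γ] {G : Multigraph}

/-- Two vertices lie in the same `Δ`-orbit. -/
def vrel (A : GraphAction Γ G) (Δ : Subgroup Γ) (x y : G.V) : Prop :=
  ∃ δ ∈ Δ, A.actV δ x = y

/-- Two edges lie in the same `Δ`-orbit. -/
def erel (A : GraphAction Γ G) (Δ : Subgroup Γ) (e f : G.E) : Prop :=
  ∃ δ ∈ Δ, A.actE δ e = f

/-- The setoid of `Δ`-orbits of vertices. -/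
def vSetoid (A : GraphAction Γ G) (Δ : Subgroup Γ) : Setoid G.V where
  r := A.vrel Δ
  iseqv := by
    constructor
    · intro x; exact ⟨1, Δ.one_mem, by simp⟩
    · rintro x y ⟨δ, hδ, h⟩
      refine ⟨δ⁻¹, Δ.inv_mem hδ, ?_⟩
      rw [map_inv, ← h]
      exact Equiv.symm_apply_apply _ _
    · rintro x y z ⟨δ₁, h1, e1⟩ ⟨δ₂, h2, e2⟩
      refine ⟨δ₂ * δ₁, Δ.mul_mem h2 h1, ?_⟩
      rw [map_mul]
      simp [Equiv.Perm.mul_apply, e1, e2]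

/-- The setoid of `Δ`-orbits of edges. -/
def eSetoid (A : GraphAction Γ G) (Δ : Subgroup Γ) : Setoid G.E where
  r := A.erel Δ
  iseqv := by
    constructor
    · intro e; exact ⟨1, Δ.one_mem, by simp⟩
    · rintro e f ⟨δ, hδ, h⟩
      refine ⟨δ⁻¹, Δ.inv_mem hδ, ?_⟩
      rw [map_inv, ← h]
      exact Equiv.symm_apply_apply _ _
    · rintro e f k ⟨δ₁, h1, e1⟩ ⟨δ₂, h2, e2⟩
      refine ⟨δ₂ * δ₁, Δ.mul_mem h2 h1, ?_⟩
      rw [map_mul]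
      simp [Equiv.Perm.mul_apply, e1, e2]

/-- An edge is `Δ`-vertical if its two endpoints lie in the same `Δ`-orbit (so it is
contracted by the quotient morphism `G → G/Δ`). -/
def Vertical (A : GraphAction Γ G) (Δ : Subgroup Γ) (e : G.E) : Prop :=
  ∃ x y : G.V, G.ends e = s(x, y) ∧ A.vrel Δ x y

/-- The vertex set of the quotient graph `G/Δ`: the `Δ`-orbits of vertices. -/
abbrev quotV (A : GraphAction Γ G) (Δ : Subgroup Γ) : Type :=
  Quotient (A.vSetoid Δ)

/-- The edge set of the quotient graph `G/Δ`: the `Δ`-orbits of non-vertical edges. -/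
abbrev quotE (A : GraphAction Γ G) (Δ : Subgroup Γ) : Type :=
  Quotient ((A.eSetoid Δ).comap (Subtype.val : {e : G.E // ¬ A.Vertical Δ e} → G.E))

/-- The genus of the quotient graph `G/Δ`. -/
noncomputable def quotGenus (A : GraphAction Γ G) (Δ : Subgroup Γ) : ℤ :=
  (Nat.card (A.quotE Δ) : ℤ) - (Nat.card (A.quotV Δ) : ℤ) + 1

/-- The order of the stabilizer `Δ_x` of a vertex `x`. -/
noncomputable def stabOrder (A : GraphAction Γ G) (Δ : Subgroup Γ) (x : G.V) : ℕ :=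
  Nat.card {γ : Γ // γ ∈ Δ ∧ A.actV γ x = x}

/-- The vertical multiplicity of a vertex `x`: the number of `Δ`-vertical edges
incident to `x`. -/
noncomputable def vertMult (A : GraphAction Γ G) (Δ : Subgroup Γ) (x : G.V) : ℕ :=
  Nat.card {e : G.E // x ∈ G.ends e ∧ A.Vertical Δ e}

/-- `r_y = |Δ_x|` for a vertex `y` of the quotient `G/Δ` and any `x` in the fiber over `y`. -/
noncomputable def r (A : GraphAction Γ G) (Δ : Subgroup Γ) (y : A.quotV Δ) : ℕ :=
  A.stabOrder Δ (Quotient.out y)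

/-- `w_y = v(x)/|Δ_x|` for a vertex `y` of the quotient `G/Δ` and any `x` in the fiber. -/
noncomputable def w (A : GraphAction Γ G) (Δ : Subgroup Γ) (y : A.quotV Δ) : ℕ :=
  A.vertMult Δ (Quotient.out y) / A.r Δ y

/-- The ramification number `R = Σ_y [2(1 - 1/r_y) + w_y]` of the quotient map `G → G/Δ`. -/
noncomputable def ram (A : GraphAction Γ G) (Δ : Subgroup Γ) : ℚ :=
  ∑ᶠ y : A.quotV Δ, (2 * (1 - 1 / (A.r Δ y : ℚ)) + (A.w Δ y : ℚ))

/-- A vertex `y` of the quotient `G/Δ` is a branch point if `2(1 - 1/r_y) + w_y > 0`. -/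
def IsBranch (A : GraphAction Γ G) (Δ : Subgroup Γ) (y : A.quotV Δ) : Prop :=
  0 < 2 * (1 - 1 / (A.r Δ y : ℚ)) + (A.w Δ y : ℚ)

/-- The quotient morphism `φ_Δ : G → G/Δ` is harmonic: for every vertex `x` of `G` and
every pair of quotient edges incident to the image of `x`, the numbers of preimages
incident to `x` agree. -/
def QuotHarmonic (A : GraphAction Γ G) (Δ : Subgroup Γ) : Prop :=
  ∀ (x : G.V) (e₁ e₂ : G.E), ¬ A.Vertical Δ e₁ → ¬ A.Vertical Δ e₂ →
    (∃ v ∈ G.ends e₁, A.vrel Δ x v) → (∃ v ∈ G.ends e₂, A.vrel Δ x v) →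
    Nat.card {e : G.E // x ∈ G.ends e ∧ A.erel Δ e e₁} =
    Nat.card {e : G.E // x ∈ G.ends e ∧ A.erel Δ e e₂}

/-- The quotient morphism `φ_Δ : G → G/Δ` is non-degenerate: no neighborhood `x(1)` is
contracted to a vertex, i.e. every vertex has a neighbor outside its `Δ`-orbit. -/
def QuotNondeg (A : GraphAction Γ G) (Δ : Subgroup Γ) : Prop :=
  ∀ x : G.V, ∃ e : G.E, x ∈ G.ends e ∧ ∃ y ∈ G.ends e, ¬ A.vrel Δ x y

/-- `Γ` acts harmonically on `G` if for every subgroup `Δ ≤ Γ` the quotient morphism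
`φ_Δ : G → G/Δ` is harmonic and non-degenerate. -/
def ActsHarmonically (A : GraphAction Γ G) : Prop :=
  ∀ Δ : Subgroup Γ, A.QuotHarmonic Δ ∧ A.QuotNondeg Δ

/-- The quotient map `G → G/Δ` is horizontally unramified: all vertex stabilizers in `Δ`
are trivial. -/
def HorizUnramified (A : GraphAction Γ G) (Δ : Subgroup Γ) : Prop :=
  ∀ (x : G.V) (γ : Γ), γ ∈ Δ → A.actV γ x = x → γ = 1

end GraphAction

/-- `M g` is the maximal order of a group acting harmonically on a graph of genus `g`. -/
noncomputable def M (g : ℕ) : ℕ :=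
  sSup {n : ℕ | ∃ (Γ : Type) (i : Group Γ) (G : Multigraph) (A : @GraphAction Γ i G),
    @GraphAction.ActsHarmonically Γ i G A ∧ G.genus = (g : ℤ) ∧ Nat.card Γ = n}

namespace Multigraph

variable (G : Multigraph)

lemma exists_ends_eq (e : G.E) : ∃ a b : G.V, G.ends e = s(a, b) :=
  Sym2.exists.mp ⟨_, rfl⟩

variable {G}

lemma ne_of_ends_eq {e : G.E} {a b : G.V} (h : G.ends e = s(a, b)) : a ≠ b := fun hab =>
  G.loopless e (by rw [h, hab]; exact Sym2.mk_isDiag_iff.mpr rfl)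

lemma connected_induction {P : G.V → Prop} {x : G.V} (hx : P x)
    (step : ∀ e u v, G.ends e = s(u, v) → P u → P v) (y : G.V) : P y := by
  induction (SimpleGraph.reachable_iff_reflTransGen x y).mp (G.connected.preconnected x y) with
  | refl => exact hx
  | tail _ hadj ih =>
    obtain ⟨-, ⟨e, he⟩ | ⟨e, he⟩⟩ := (SimpleGraph.fromRel_adj _ _ _).mp hadj
    · exact step e _ _ he ih
    · exact step e _ _ (he.trans Sym2.eq_swap) ih

end Multigraph

lemma perm_apply_eq_of_mem_zpowers {Γ α : Type} [Group Γ] (π : Γ →* Equiv.Perm α) {γ : Γ}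
    {a : α} (h : π γ a = a) {δ : Γ} (hδ : δ ∈ Subgroup.zpowers γ) : π δ a = a := by
  obtain ⟨k, rfl⟩ := Subgroup.mem_zpowers_iff.mp hδ
  rw [map_zpow]
  exact Function.IsFixedPt.perm_zpow h k

lemma card_perm_orbit_eq_card_of_free {Γ α : Type} [Group Γ] (π : Γ →* Equiv.Perm α)
    (C : Subgroup Γ) {x : α} (hfree : ∀ δ ∈ C, π δ x = x → δ = 1) :
    Nat.card {y : α // ∃ δ ∈ C, π δ y = x} = Nat.card C := by
  refine (Nat.card_eq_of_bijective (fun c : C => ⟨π c x, c⁻¹, C.inv_mem c.2, by simp⟩)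
    ⟨fun c d hcd => ?_, fun ⟨y, δ, hδ, hy⟩ => ⟨⟨δ⁻¹, C.inv_mem hδ⟩, Subtype.ext ?_⟩⟩).symm
  · have hcd : π c x = π d x := congrArg Subtype.val hcd
    have : (d : Γ)⁻¹ * c = 1 :=
      hfree _ (C.mul_mem (C.inv_mem d.2) c.2) (by simp [Equiv.Perm.mul_apply, hcd])
    exact Subtype.ext (inv_mul_eq_one.mp this).symm
  · simp [← hy]

lemma Nat.card_eq_mul_card_quotient {α : Type} [Finite α] (s : Setoid α) {n : ℕ}
    (h : ∀ x, Nat.card {y // s y x} = n) : Nat.card α = n * Nat.card (Quotient s) := by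
  have := Fintype.ofFinite (Quotient s)
  have hfiber (q : Quotient s) : Nat.card {y // Quotient.mk s y = q} = n := by
    rw [← h q.out]
    exact Nat.card_congr (Equiv.subtypeEquivRight fun y => Quotient.mk_eq_iff_out)
  calc Nat.card α = Nat.card (Σ q : Quotient s, {y // Quotient.mk s y = q}) :=
        Nat.card_congr (Equiv.sigmaFiberEquiv _).symm
    _ = n * Nat.card (Quotient s) := by
        simp [Nat.card_sigma, hfiber, Nat.card_eq_fintype_card, mul_comm]

namespace GraphAction

variable {Γ : Type} [Group Γ] {G : Multigraph} (A : GraphAction Γ G)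

lemma not_vertical_of_forall_fixed {Δ : Subgroup Γ} {x : G.V}
    (hx : ∀ δ ∈ Δ, A.actV δ x = x) {e : G.E} (hxe : x ∈ G.ends e) : ¬ A.Vertical Δ e := by
  rintro ⟨a, b, hab, δ, hδ, hd⟩
  obtain ⟨y, hy⟩ := Sym2.mem_iff_exists.mp hxe
  have hxy := G.ne_of_ends_eq hy
  rw [hy] at hab
  rcases Sym2.eq_iff.mp hab with ⟨rfl, rfl⟩ | ⟨rfl, rfl⟩
  · exact hxy (hx δ hδ ▸ hd)
  · refine hxy (Eq.symm ?_)
    rw [← hx δ⁻¹ (Δ.inv_mem hδ), ← hd]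
    simp

lemma actE_eq_of_fixes_incident (hA : A.ActsHarmonically) {γ : Γ} {x : G.V} {e f : G.E}
    (hx : A.actV γ x = x) (hxe : x ∈ G.ends e) (he : A.actE γ e = e) (hxf : x ∈ G.ends f) :
    A.actE γ f = f := by
  set Δ := Subgroup.zpowers γ
  have hΔx : ∀ δ ∈ Δ, A.actV δ x = x := fun δ => perm_apply_eq_of_mem_zpowers A.actV hx
  have hxx : A.vrel Δ x x := ⟨1, Δ.one_mem, by simp⟩
  have hcard := (hA Δ).1 x e f (A.not_vertical_of_forall_fixed hΔx hxe)
    (A.not_vertical_of_forall_fixed hΔx hxf) ⟨x, hxe, hxx⟩ ⟨x, hxf, hxx⟩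
  -- the `Δ`-orbit of the fixed edge `e` is `{e}`; harmonicity makes every orbit at `x` a singleton
  have horbit_e : ∀ h, A.erel Δ h e → h = e := by
    rintro h ⟨δ, hδ, hd⟩
    calc h = A.actE δ⁻¹ (A.actE δ h) := by simp
      _ = e := by rw [hd]; exact perm_apply_eq_of_mem_zpowers A.actE he (Δ.inv_mem hδ)
  have hone : Nat.card {h // x ∈ G.ends h ∧ A.erel Δ h e} = 1 :=
    Nat.card_eq_one_iff_unique.mpr ⟨⟨fun a b => Subtype.ext
      ((horbit_e _ a.2.2).trans (horbit_e _ b.2.2).symm)⟩, ⟨⟨e, hxe, 1, Δ.one_mem, by simp⟩⟩⟩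
  obtain ⟨hsub, -⟩ := Nat.card_eq_one_iff_unique.mp (hcard ▸ hone)
  have hxf' : x ∈ G.ends (A.actE γ⁻¹ f) := by
    rw [A.ends_map]
    exact Sym2.mem_map.mpr ⟨x, hxf, hΔx _ (Δ.inv_mem (Subgroup.mem_zpowers γ))⟩
  have hfix : A.actE γ⁻¹ f = f := congrArg Subtype.val
    (hsub.elim ⟨_, hxf', γ, Subgroup.mem_zpowers γ, by simp⟩ ⟨f, hxf, 1, Δ.one_mem, by simp⟩)
  calc A.actE γ f = A.actE γ (A.actE γ⁻¹ f) := by rw [hfix]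
    _ = f := by simp

lemma actV_eq_of_fixes_end {γ : Γ} {e : G.E} {x y : G.V} (hxy : G.ends e = s(x, y))
    (hx : A.actV γ x = x) (he : A.actE γ e = e) : A.actV γ y = y := by
  have h := A.ends_map γ e
  rw [he, hxy, Sym2.map_mk, hx] at h
  exact (Sym2.congr_right.mp h).symm

theorem eq_one_of_fixes_vertex_and_edge (hA : A.ActsHarmonically) {γ : Γ} {x : G.V} {e : G.E}
    (hx : A.actV γ x = x) (hxe : x ∈ G.ends e) (he : A.actE γ e = e) : γ = 1 := by
  have hstar : ∀ v, A.actV γ v = v ∧ ∀ f, v ∈ G.ends f → A.actE γ f = f := by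
    refine G.connected_induction ⟨hx, fun f => A.actE_eq_of_fixes_incident hA hx hxe he⟩ ?_
    rintro e' u v huv ⟨hu, hue⟩
    have he' := hue e' (by simp [huv])
    have hv := A.actV_eq_of_fixes_end huv hu he'
    exact ⟨hv, fun f => A.actE_eq_of_fixes_incident hA hv (by simp [huv]) he'⟩
  refine A.faithful γ (fun v => (hstar v).1) fun f => ?_
  obtain ⟨a, b, hab⟩ := G.exists_ends_eq f
  exact (hstar a).2 f (by simp [hab])

lemma card_edge_stabilizer_le_two (hA : A.ActsHarmonically) (e : G.E) :
    Nat.card {γ : Γ // A.actE γ e = e} ≤ 2 := by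
  obtain ⟨a, b, hab⟩ := G.exists_ends_eq e
  have hmem (σ : {γ : Γ // A.actE γ e = e}) : A.actV σ a ∈ ({a, b} : Finset G.V) := by
    have h : A.actV σ a ∈ G.ends (A.actE σ e) := by
      rw [A.ends_map, hab]
      exact Sym2.mem_map.mpr ⟨a, Sym2.mem_mk_left _ _, rfl⟩
    simpa [σ.2, hab] using h
  have hinj : Function.Injective fun σ : {γ : Γ // A.actE γ e = e} =>
      (⟨A.actV σ a, hmem σ⟩ : {v // v ∈ ({a, b} : Finset G.V)}) := by
    rintro ⟨σ, hσ⟩ ⟨τ, hτ⟩ h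
    have ha : A.actV σ a = A.actV τ a := congrArg Subtype.val h
    have h1 : τ⁻¹ * σ = 1 := A.eq_one_of_fixes_vertex_and_edge hA (x := a) (e := e)
      (by simp [Equiv.Perm.mul_apply, ha]) (by simp [hab])
      (by simp [Equiv.Perm.mul_apply, Equiv.symm_apply_eq, hσ, hτ])
    exact Subtype.ext (inv_mul_eq_one.mp h1).symm
  calc Nat.card {γ : Γ // A.actE γ e = e}
      ≤ Nat.card {v // v ∈ ({a, b} : Finset G.V)} := Nat.card_le_card_of_injective _ hinj
    _ = ({a, b} : Finset G.V).card := by rw [Nat.card_eq_fintype_card, Fintype.card_coe]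
    _ ≤ 2 := Finset.card_le_two

lemma vertical_actE {C : Subgroup Γ} (hC : C.Normal) (γ : Γ) {e : G.E}
    (he : A.Vertical C e) : A.Vertical C (A.actE γ e) := by
  obtain ⟨a, b, hab, δ, hδ, hd⟩ := he
  refine ⟨A.actV γ a, A.actV γ b, by rw [A.ends_map, hab, Sym2.map_mk],
    γ * δ * γ⁻¹, hC.conj_mem δ hδ γ, ?_⟩
  simp [Equiv.Perm.mul_apply, hd]

theorem card_le_two_mul_card_vertical (hA : A.ActsHarmonically) {C : Subgroup Γ} (hC : C.Normal)
    {e : G.E} (he : A.Vertical C e) : Nat.card Γ ≤ 2 * Nat.card {f // A.Vertical C f} := by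
  let : MulAction Γ G.E := .compHom G.E A.actE
  have horbit : Nat.card (MulAction.orbit Γ e) ≤ Nat.card {f // A.Vertical C f} :=
    Nat.card_le_card_of_injective
      (fun f => ⟨f.1, by obtain ⟨γ, hγ⟩ := f.2; exact hγ ▸ A.vertical_actE hC γ he⟩)
      fun f f' h => Subtype.ext (by simpa using h)
  calc Nat.card Γ = Nat.card (MulAction.orbit Γ e) * Nat.card (MulAction.stabilizer Γ e) := by
        rw [← Nat.card_prod, Nat.card_congr (MulAction.orbitProdStabilizerEquivGroup Γ e)]
    _ ≤ Nat.card {f // A.Vertical C f} * 2 :=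
        Nat.mul_le_mul horbit (A.card_edge_stabilizer_le_two hA e)
    _ = 2 * Nat.card {f // A.Vertical C f} := mul_comm _ _

def quotEnds (Δ : Subgroup Γ) (e : G.E) : Sym2 (A.quotV Δ) :=
  (G.ends e).map (Quotient.mk _)

lemma vertical_iff_isDiag_quotEnds {Δ : Subgroup Γ} {e : G.E} :
    A.Vertical Δ e ↔ (A.quotEnds Δ e).IsDiag := by
  obtain ⟨a, b, hab⟩ := G.exists_ends_eq e
  rw [quotEnds, hab, Sym2.map_mk, Sym2.mk_isDiag_iff, Quotient.eq]
  refine ⟨?_, fun h => ⟨a, b, hab, h⟩⟩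
  rintro ⟨x, y, hxy, h⟩
  rcases Sym2.eq_iff.mp (hab.symm.trans hxy) with ⟨rfl, rfl⟩ | ⟨rfl, rfl⟩
  · exact h
  · exact Setoid.symm' _ h

lemma quotEnds_actE {Δ : Subgroup Γ} {δ : Γ} (hδ : δ ∈ Δ) (e : G.E) :
    A.quotEnds Δ (A.actE δ e) = A.quotEnds Δ e := by
  rw [quotEnds, A.ends_map, Sym2.map_map]
  exact Sym2.map_congr fun v _ => Quotient.sound ⟨δ⁻¹, Δ.inv_mem hδ, by simp⟩

lemma card_V_eq_mul (C : Subgroup Γ) (hunram : A.HorizUnramified C) :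
    Nat.card G.V = Nat.card C * Nat.card (A.quotV C) :=
  Nat.card_eq_mul_card_quotient _ fun x =>
    card_perm_orbit_eq_card_of_free A.actV C fun δ hδ => hunram x δ hδ

lemma eq_one_of_actE_eq_of_not_vertical {C : Subgroup Γ} (hunram : A.HorizUnramified C)
    {e : G.E} (he : ¬ A.Vertical C e) {δ : Γ} (hδ : δ ∈ C) (hfix : A.actE δ e = e) : δ = 1 := by
  obtain ⟨a, b, hab⟩ := G.exists_ends_eq e
  have h := A.ends_map δ e
  rw [hfix, hab, Sym2.map_mk] at h
  rcases Sym2.eq_iff.mp h with ⟨ha, -⟩ | ⟨-, hb⟩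
  · exact hunram a δ hδ ha.symm
  · exact absurd ⟨a, b, hab, δ, hδ, hb.symm⟩ he

lemma card_not_vertical_eq_mul (C : Subgroup Γ) (hunram : A.HorizUnramified C) :
    Nat.card {e // ¬ A.Vertical C e} = Nat.card C * Nat.card (A.quotE C) := by
  refine Nat.card_eq_mul_card_quotient _ fun x => ?_
  have horbit : ∀ {f}, A.erel C f x → ¬ A.Vertical C f := by
    rintro f ⟨δ, hδ, hd⟩
    have hx := x.2
    rwa [← hd, vertical_iff_isDiag_quotEnds, A.quotEnds_actE hδ,
      ← vertical_iff_isDiag_quotEnds] at hx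
  change Nat.card {y : {e // ¬ A.Vertical C e} // A.erel C y x} = _
  rw [Nat.card_congr (Equiv.subtypeSubtypeEquivSubtype horbit)]
  exact card_perm_orbit_eq_card_of_free A.actE C fun δ hδ =>
    A.eq_one_of_actE_eq_of_not_vertical hunram x.2 hδ

/-- The quotient `G/Δ` with parallel edges merged and loops dropped. -/
def quotGraph (Δ : Subgroup Γ) : SimpleGraph (A.quotV Δ) :=
  SimpleGraph.fromRel fun a b => ∃ e, A.quotEnds Δ e = s(a, b)

lemma quotGraph_connected (Δ : Subgroup Γ) : (A.quotGraph Δ).Connected := by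
  obtain ⟨x⟩ := G.connected.nonempty
  have hreach : ∀ y, (A.quotGraph Δ).Reachable ⟦x⟧ ⟦y⟧ := by
    refine G.connected_induction (SimpleGraph.Reachable.refl _) fun e u v huv hu => hu.trans ?_
    by_cases h : (⟦u⟧ : A.quotV Δ) = ⟦v⟧
    · rw [h]
    · exact SimpleGraph.Adj.reachable ⟨h, Or.inl ⟨e, by rw [quotEnds, huv, Sym2.map_mk]⟩⟩
  exact (SimpleGraph.connected_iff_exists_forall_reachable _).mpr ⟨⟦x⟧, Quotient.ind hreach⟩

lemma card_edgeSet_quotGraph_le (Δ : Subgroup Γ) :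
    Nat.card (A.quotGraph Δ).edgeSet ≤ Nat.card (A.quotE Δ) := by
  have hlift : ∀ s : (A.quotGraph Δ).edgeSet, ∃ e : {e // ¬ A.Vertical Δ e},
      A.quotEnds Δ e = s := by
    rintro ⟨s, hs⟩
    induction s using Sym2.ind with
    | h a b =>
      obtain ⟨e, he⟩ : ∃ e, A.quotEnds Δ e = s(a, b) := by
        obtain ⟨-, ⟨e, he⟩ | ⟨e, he⟩⟩ :=
          (SimpleGraph.fromRel_adj _ _ _).mp ((SimpleGraph.mem_edgeSet _).mp hs)
        exacts [⟨e, he⟩, ⟨e, he.trans Sym2.eq_swap⟩]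
      refine ⟨⟨e, fun hv => (A.quotGraph Δ).not_isDiag_of_mem_edgeSet hs ?_⟩, he⟩
      exact he ▸ A.vertical_iff_isDiag_quotEnds.mp hv
  choose lift hlift using hlift
  refine Nat.card_le_card_of_injective (fun s => (⟦lift s⟧ : A.quotE Δ)) fun s t hst => ?_
  obtain ⟨δ, hδ, hd⟩ := Quotient.exact hst
  exact Subtype.ext (by rw [← hlift, ← hlift, ← hd, A.quotEnds_actE hδ])

lemma card_quotV_le_card_quotE_add_one (Δ : Subgroup Γ) :
    Nat.card (A.quotV Δ) ≤ Nat.card (A.quotE Δ) + 1 :=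
  (A.quotGraph_connected Δ).card_vert_le_card_edgeSet_add_one.trans
    (Nat.add_le_add_right (A.card_edgeSet_quotGraph_le Δ) 1)

lemma quotGenus_nonneg (Δ : Subgroup Γ) : 0 ≤ A.quotGenus Δ := by
  have := A.card_quotV_le_card_quotE_add_one Δ
  rw [quotGenus]
  omega

theorem genus_sub_one_eq (C : Subgroup Γ) (hunram : A.HorizUnramified C) :
    G.genus - 1 = Nat.card {e // A.Vertical C e} + Nat.card C * (A.quotGenus C - 1) := by
  have hsplit := Nat.card_congr (Equiv.sumCompl fun e => A.Vertical C e)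
  rw [Nat.card_sum, A.card_not_vertical_eq_mul C hunram] at hsplit
  rw [Multigraph.genus, quotGenus, ← Nat.card_eq_fintype_card, ← Nat.card_eq_fintype_card,
    ← hsplit, A.card_V_eq_mul C hunram]
  push_cast
  ring

end GraphAction

theorem low_genus_quotient_bound_general {Γ : Type} [Group Γ] {G : Multigraph}
    (A : GraphAction Γ G) (hA : A.ActsHarmonically) (g : ℕ) (hg : G.genus = (g : ℤ))
    (h2 : 2 < g) (C : Subgroup Γ) (hnorm : C.Normal)
    (p : ℕ) (hC : Nat.card C = p) (hpg : p < g)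
    (hunram : A.HorizUnramified C) (hqg : A.quotGenus C ≤ 1) :
    Nat.card Γ ≤ 4 * (g - 1) := by
  have hRH := A.genus_sub_one_eq C hunram
  rw [hg, hC] at hRH
  have hvert : g - 1 ≤ Nat.card {e // A.Vertical C e} ∧
      Nat.card {e // A.Vertical C e} ≤ 2 * (g - 1) := by
    obtain hq | hq : A.quotGenus C = 0 ∨ A.quotGenus C = 1 := by
      have := A.quotGenus_nonneg C
      omega
    all_goals rw [hq] at hRH; omega
  obtain ⟨⟨e, he⟩, -⟩ := Nat.card_pos_iff.mp (show 0 < Nat.card {e // A.Vertical C e} by omega)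
  have := A.card_le_two_mul_card_vertical hA hnorm he
  omega

/-- Suppose `Γ` acts harmonically on `G` of genus `g > 2`, and `C ≤ Γ`
is a normal cyclic subgroup of prime order `p < g` such that `G → G/C` is horizontally
unramified and `g(G/C) ≤ 1`. Then `|Γ| ≤ 4(g − 1)`. -/
theorem low_genus_quotient_bound {Γ : Type} [Group Γ] {G : Multigraph}
    (A : GraphAction Γ G) (hA : A.ActsHarmonically) (g : ℕ) (hg : G.genus = (g : ℤ))
    (h2 : 2 < g) (C : Subgroup Γ) (hnorm : C.Normal) (hcyc : IsCyclic C)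
    (p : ℕ) (hp : p.Prime) (hC : Nat.card C = p) (hpg : p < g)
    (hunram : A.HorizUnramified C) (hqg : A.quotGenus C ≤ 1) :
    Nat.card Γ ≤ 4 * (g - 1) :=
  low_genus_quotient_bound_general A hA g hg h2 C hnorm p hC hpg hunram hqg
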